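/- arXiv:math/0209348 — 6 statements merged into one kernel-verified Lean document; each statement's English description precedes it below -/
import Mathlib

section
/- If w is a closed walk of even length 2l (l ≥ 2) in a graph G that is minimal (no two consecutive edges, cyclically, are equal), then w contains a cycle. -/
/-!
A minimal closed walk never backtracks. Follow it until it first revisits a vertex `x`: the stretch
from the first visit of `x` to this revisit is a path closed up by one edge, which is a cycle
because the walk neither uses a loop nor backtracks, and it is an initial segment of the rotation
of the walk at `x`.
-/

open SimpleGraph
variable {V : Type*}

/-- A closed walk is minimal if no two cyclically consecutive edges are equal. -/
def IsMinimalClosedWalk {G : SimpleGraph V} {v : V} (w : G.Walk v v) : Prop :=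
  ∀ i : ℕ, i < w.edges.length →
    w.edges[i]? ≠ w.edges[(i + 1) % w.edges.length]?

/-- A closed walk contains a cycle if after a cyclic rotation some initial segment
of its edges is the edge sequence of a cycle. -/
def WalkContainsCycle [DecidableEq V] {G : SimpleGraph V} {v : V} (w : G.Walk v v) : Prop :=
  ∃ (u : V) (hu : u ∈ w.support) (c : G.Walk u u), c.IsCycle ∧ c.edges <+: (w.rotate u hu).edges

namespace SimpleGraph.Walk

variable {G : SimpleGraph V}

section DropUntil

variable [DecidableEq V]

lemma dropUntil_append_of_mem_left {u v w x : V} (p : G.Walk u v) (q : G.Walk v w)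
    (hx : x ∈ p.support) :
    (p.append q).dropUntil x (support_subset_support_append_left _ _ hx) =
      (p.dropUntil x hx).append q := by
  induction p with
  | nil =>
    rw [mem_support_nil_iff] at hx
    subst hx
    simp
  | @cons a _ _ h p ih =>
    by_cases hax : a = x
    · subst hax
      simp
    · simp only [cons_append, dropUntil, dif_neg hax]
      exact ih q _

lemma dropUntil_concat_of_mem {u v w x : V} (p : G.Walk u v) (h : G.Adj v w)
    (hx : x ∈ p.support) :
    (p.concat h).dropUntil x (support_subset_support_append_left _ _ hx) =
      (p.dropUntil x hx).concat h :=
  dropUntil_append_of_mem_left p (cons h nil) hx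

lemma edges_dropUntil_prefix_edges_rotate {u v : V} (c : G.Walk v v) (hu : u ∈ c.support) :
    (c.dropUntil u hu).edges <+: (c.rotate u hu).edges := by
  rw [rotate, edges_append]
  exact List.prefix_append _ _

end DropUntil

lemma IsPath.isCycle_concat {u v : V} {p : G.Walk u v} (hp : p.IsPath) (h : G.Adj v u)
    (hnb : (p.concat h).edges.IsChain (· ≠ ·)) : (p.concat h).IsCycle := by
  rw [← isCycle_reverse, reverse_concat, cons_isCycle_iff]
  refine ⟨hp.reverse, fun he => ?_⟩
  have hlen : p.length = 1 := by
    simpa using hp.reverse.length_eq_one_of_mem_edges (Sym2.eq_swap ▸ he)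
  cases p with
  | nil => simp at hlen
  | cons h' q =>
    cases q with
    | nil => simp [Sym2.eq_swap] at hnb
    | cons => simp at hlen

lemma exists_isCycle_prefix_dropUntil [DecidableEq V] {u v : V} (p : G.Walk u v)
    (hp : ¬p.IsPath) (hnb : p.edges.IsChain (· ≠ ·)) :
    ∃ (x : V) (hx : x ∈ p.support) (c : G.Walk x x),
      c.IsCycle ∧ c.edges <+: (p.dropUntil x hx).edges := by
  induction p using concatRec with
  | Hnil => exact absurd IsPath.nil hp
  | @Hconcat u v w q h ih =>
    rw [edges_concat, List.concat_eq_append] at hnb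
    by_cases hq : q.IsPath
    · have hw : w ∈ q.support := by
        by_contra hw
        exact hp (hq.concat hw h)
      refine ⟨w, support_subset_support_append_left _ _ hw, (q.dropUntil w hw).concat h, ?_, ?_⟩
      · refine (hq.dropUntil hw).isCycle_concat h (hnb.suffix ?_)
        rw [edges_concat, List.concat_eq_append]
        exact List.suffix_append_self_iff.mpr (q.edges_dropUntil_suffix_edges hw)
      · rw [dropUntil_concat_of_mem _ _ hw]
    · obtain ⟨x, hx, c, hc, hpre⟩ :=
        ih hq (hnb.infix (List.prefix_append q.edges [s(v, w)]).isInfix)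
      refine ⟨x, support_subset_support_append_left _ _ hx, c, hc, hpre.trans ?_⟩
      rw [dropUntil_concat_of_mem, edges_concat]
      exact List.prefix_concat _ _

end SimpleGraph.Walk

lemma IsMinimalClosedWalk.isChain_edges {G : SimpleGraph V} {v : V} {w : G.Walk v v}
    (hmin : IsMinimalClosedWalk w) : w.edges.IsChain (· ≠ ·) := by
  refine List.isChain_iff_getElem.mpr fun i hi he => hmin i (by omega) ?_
  rw [Nat.mod_eq_of_lt hi, List.getElem?_eq_getElem (by omega), List.getElem?_eq_getElem hi, he]

/-- A minimal closed walk of even length `2l` with `l ≥ 2` contains a cycle. -/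
theorem minimal_even_closed_walk_contains_cycle [DecidableEq V] {G : SimpleGraph V} {v : V}
    (w : G.Walk v v) (l : ℕ) (hl : 2 ≤ l) (hlen : w.length = 2 * l)
    (hmin : IsMinimalClosedWalk w) : WalkContainsCycle w := by
  have hnotPath : ¬w.IsPath := by
    rw [Walk.isPath_iff_nil, ← Walk.length_eq_zero_iff]
    omega
  obtain ⟨x, hx, c, hc, hpre⟩ := w.exists_isCycle_prefix_dropUntil hnotPath hmin.isChain_edges
  exact ⟨x, hx, c, hc, hpre.trans (w.edges_dropUntil_prefix_edges_rotate hx)⟩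
end

section
/- Let G be a triangle-free graph in which any two chordless cycles share at most one edge. If two chordless cycles c1 and c2 have a common edge e, then there is no edge of G connecting a vertex of c1 to a vertex of c2 other than e itself. -/
open SimpleGraph
variable {V : Type*}

/-- A cycle is chordless if every edge of `G` joining two vertices of the cycle is an
edge of the cycle (equivalently, no edge of `G` joins two non-consecutive vertices). -/
def IsChordlessCycle {G : SimpleGraph V} {v : V} (c : G.Walk v v) : Prop :=
  c.IsCycle ∧ ∀ x y, x ∈ c.support → y ∈ c.support → G.Adj x y → s(x, y) ∈ c.edges

/-- The edge sets of chordless cycles of `G`. -/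
def chordlessCycleSets (G : SimpleGraph V) : Set (Set (Sym2 V)) :=
  {S | ∃ (v : V) (c : G.Walk v v), IsChordlessCycle c ∧ S = {e | e ∈ c.edges}}

/-- `G` is triangle-free: it has no cycle of length 3. -/
def TriangleFree (G : SimpleGraph V) : Prop :=
  ∀ (v : V) (c : G.Walk v v), c.IsCycle → c.length ≠ 3

/-- Any two (distinct) chordless cycles of `G` share at most one edge. -/
def ChordlessCyclesShareAtMostOneEdge (G : SimpleGraph V) : Prop :=
  ∀ S ∈ chordlessCycleSets G, ∀ T ∈ chordlessCycleSets G, S ≠ T → (S ∩ T).ncard ≤ 1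

/-! A crossing edge `xy` closes, through a vertex common to `c1` and `c2`, a cycle all of whose
other edges lie on `c1` or `c2`. A shortest such cycle, the crossing edge being allowed to vary,
is chordless: a chord splits it into two shorter cycles, one of which is again of this kind.
Being chordless and distinct from `c1` and `c2`, it shares at most one edge with each of them,
so it is a triangle. -/

namespace SimpleGraph.Walk

theorem exists_walk_edges_subset_of_mem_support {G : SimpleGraph V} {s t u w : V}
    (c : G.Walk s t) (hu : u ∈ c.support) (hw : w ∈ c.support) :
    ∃ p : G.Walk u w, p.edges ⊆ c.edges := by
  classical
  refine ⟨(c.takeUntil u hu).reverse.append (c.takeUntil w hw), fun d hd => ?_⟩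
  rw [edges_append, edges_reverse, List.mem_append, List.mem_reverse] at hd
  exact hd.elim (c.edges_takeUntil_subset_edges hu ·) (c.edges_takeUntil_subset_edges hw ·)

theorem IsTrail.ncard_edges {G : SimpleGraph V} {u v : V} {p : G.Walk u v} (hp : p.IsTrail) :
    {e | e ∈ p.edges}.ncard = p.length := by
  classical
  rw [show {e | e ∈ p.edges} = ↑p.edges.toFinset by ext; simp, Set.ncard_coe_finset,
    List.toFinset_card_of_nodup hp.edges_nodup, length_edges]

theorem IsCycle.exists_shorter_cycles_of_chord {G : SimpleGraph V} {r u v : V}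
    {Z : G.Walk r r} (hZ : Z.IsCycle) (hu : u ∈ Z.support) (hv : v ∈ Z.support)
    (huv : G.Adj u v) (hc : s(u, v) ∉ Z.edges) :
    ∃ (P : G.Walk u v) (Q : G.Walk v u), (cons huv.symm P).IsCycle ∧ (cons huv Q).IsCycle ∧
      P.length + 1 < Z.length ∧ Q.length + 1 < Z.length ∧ (P.edges ++ Q.edges).Perm Z.edges := by
  classical
  set R := Z.rotate u hu
  have hR : R.IsCycle := hZ.rotate hu
  have hvR : v ∈ R.support := (Z.mem_support_rotate_iff u hu).mpr hv
  set P := R.takeUntil v hvR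
  set Q := R.dropUntil v hvR
  have hPQ : P.append Q = R := R.take_spec hvR
  have hperm : (P.edges ++ Q.edges).Perm Z.edges := by
    rw [← edges_append, hPQ]; exact (Z.rotate_edges u hu).perm
  have hc' : s(u, v) ∉ P.edges ∧ s(u, v) ∉ Q.edges := by
    rwa [← hperm.mem_iff, List.mem_append, not_or] at hc
  have hP : (cons huv.symm P).IsCycle :=
    (cons_isCycle_iff P huv.symm).mpr ⟨hR.isPath_takeUntil hvR, by rw [Sym2.eq_swap]; exact hc'.1⟩
  have hQ : (cons huv Q).IsCycle :=
    (cons_isCycle_iff Q huv).mpr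
      ⟨(hPQ ▸ hR).isPath_of_append_right (not_nil_of_ne huv.ne), hc'.2⟩
  have hlen : P.length + Q.length = Z.length := by
    rw [← length_append, hPQ, length_rotate]
  have hP3 : 3 ≤ P.length + 1 := hP.three_le_length
  have hQ3 : 3 ≤ Q.length + 1 := hQ.three_le_length
  exact ⟨P, Q, hP, hQ, by omega, by omega, hperm⟩

end SimpleGraph.Walk

section CrossingCycles

variable {G : SimpleGraph V} {v1 v2 : V} (c1 : G.Walk v1 v1) (c2 : G.Walk v2 v2)

def IsCrossingEdge (d : Sym2 V) : Prop :=
  ∃ x y, d = s(x, y) ∧ x ∈ c1.support ∧ x ∉ c2.support ∧ y ∈ c2.support ∧ y ∉ c1.support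

structure IsCrossingCycle {r : V} (Z : G.Walk r r) (d : Sym2 V) : Prop where
  isCycle : Z.IsCycle
  mem_edges : d ∈ Z.edges
  isCrossingEdge : IsCrossingEdge c1 c2 d
  mem_edges_or : ∀ d' ∈ Z.edges, d' = d ∨ d' ∈ c1.edges ∨ d' ∈ c2.edges

variable {c1 c2}

theorem IsCrossingEdge.notMem_edges {d : Sym2 V} (hd : IsCrossingEdge c1 c2 d) :
    d ∉ c1.edges ∧ d ∉ c2.edges := by
  obtain ⟨x, y, rfl, -, hx2, -, hy1⟩ := hd
  exact ⟨fun h => hy1 (c1.snd_mem_support_of_mem_edges h),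
    fun h => hx2 (c2.fst_mem_support_of_mem_edges h)⟩

theorem IsCrossingCycle.mem_support {r z : V} {Z : G.Walk r r} {d : Sym2 V}
    (hZ : IsCrossingCycle c1 c2 Z d) (hz : z ∈ Z.support) :
    z ∈ c1.support ∨ z ∈ c2.support := by
  obtain ⟨d', hd', hzd'⟩ :=
    (Walk.mem_support_iff_exists_mem_edges_of_not_nil hZ.isCycle.not_nil).mp hz
  rcases hZ.mem_edges_or d' hd' with rfl | h1 | h2
  · obtain ⟨x, y, rfl, hx1, -, hy2, -⟩ := hZ.isCrossingEdge
    rcases Sym2.mem_iff.mp hzd' with rfl | rfl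
    exacts [Or.inl hx1, Or.inr hy2]
  · exact Or.inl (Walk.mem_support_of_mem_edges h1 hzd')
  · exact Or.inr (Walk.mem_support_of_mem_edges h2 hzd')

theorem mem_edges_or_isCrossingEdge (h1 : IsChordlessCycle c1) (h2 : IsChordlessCycle c2)
    {u v : V} (hu : u ∈ c1.support ∨ u ∈ c2.support) (hv : v ∈ c1.support ∨ v ∈ c2.support)
    (huv : G.Adj u v) :
    (s(u, v) ∈ c1.edges ∨ s(u, v) ∈ c2.edges) ∨ IsCrossingEdge c1 c2 s(u, v) := by
  by_cases hu1 : u ∈ c1.support <;> by_cases hv1 : v ∈ c1.support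
  · exact Or.inl (Or.inl (h1.2 u v hu1 hv1 huv))
  all_goals by_cases hu2 : u ∈ c2.support <;> by_cases hv2 : v ∈ c2.support
  all_goals first
    | exact Or.inl (Or.inr (h2.2 u v hu2 hv2 huv))
    | exact Or.inr ⟨u, v, rfl, by tauto⟩
    | exact Or.inr ⟨v, u, Sym2.eq_swap, by tauto⟩

theorem IsCrossingCycle.of_mem_edges {r w : V} {Z : G.Walk r r} {d g : Sym2 V}
    (hZ : IsCrossingCycle c1 c2 Z d) {K : G.Walk w w} (hK : K.IsCycle) (hd : d ∈ K.edges)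
    (hg : g ∈ c1.edges ∨ g ∈ c2.edges) (hsub : ∀ d' ∈ K.edges, d' = g ∨ d' ∈ Z.edges) :
    IsCrossingCycle c1 c2 K d :=
  ⟨hK, hd, hZ.isCrossingEdge,
    fun d' hd' => (hsub d' hd').elim (fun h => h ▸ Or.inr hg) (hZ.mem_edges_or d')⟩

theorem IsCrossingCycle.of_notMem_edges {r w : V} {Z : G.Walk r r} {d g : Sym2 V}
    (hZ : IsCrossingCycle c1 c2 Z d) {K : G.Walk w w} (hK : K.IsCycle) (hd : d ∉ K.edges)
    (hg : g ∈ K.edges) (hgc : IsCrossingEdge c1 c2 g)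
    (hsub : ∀ d' ∈ K.edges, d' = g ∨ d' ∈ Z.edges) :
    IsCrossingCycle c1 c2 K g := by
  refine ⟨hK, hg, hgc, fun d' hd' => (hsub d' hd').imp_right fun h => ?_⟩
  exact (hZ.mem_edges_or d' h).resolve_left (by rintro rfl; exact hd hd')

theorem IsCrossingCycle.exists_shorter (h1 : IsChordlessCycle c1) (h2 : IsChordlessCycle c2)
    {r : V} {Z : G.Walk r r} {d : Sym2 V} (hZ : IsCrossingCycle c1 c2 Z d)
    (hch : ¬ IsChordlessCycle Z) :
    ∃ (w : V) (K : G.Walk w w) (g : Sym2 V), IsCrossingCycle c1 c2 K g ∧ K.length < Z.length := by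
  obtain ⟨u, v, hu, hv, huv, hc⟩ :
      ∃ u v, u ∈ Z.support ∧ v ∈ Z.support ∧ G.Adj u v ∧ s(u, v) ∉ Z.edges := by
    simpa [IsChordlessCycle, hZ.isCycle] using hch
  obtain ⟨P, Q, hP, hQ, hPlen, hQlen, hperm⟩ :=
    hZ.isCycle.exists_shorter_cycles_of_chord hu hv huv hc
  have hdisj := List.disjoint_of_nodup_append (hperm.nodup_iff.mpr hZ.isCycle.edges_nodup)
  have hsubP : ∀ d' ∈ (Walk.cons huv.symm P).edges, d' = s(u, v) ∨ d' ∈ Z.edges := by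
    intro d' hd'
    rw [Walk.edges_cons, List.mem_cons, Sym2.eq_swap] at hd'
    exact hd'.imp_right fun h => hperm.subset (List.mem_append_left _ h)
  have hsubQ : ∀ d' ∈ (Walk.cons huv Q).edges, d' = s(u, v) ∨ d' ∈ Z.edges := by
    intro d' hd'
    rw [Walk.edges_cons, List.mem_cons] at hd'
    exact hd'.imp_right fun h => hperm.subset (List.mem_append_right _ h)
  have hdne : d ≠ s(u, v) := fun h => hc (h ▸ hZ.mem_edges)
  have hdPQ : d ∈ P.edges ∨ d ∈ Q.edges := List.mem_append.mp (hperm.mem_iff.mpr hZ.mem_edges)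
  -- A chord on `c1` or `c2` keeps `d` in the shorter cycle through it; a crossing chord
  -- replaces `d` in the shorter cycle avoiding it.
  rcases mem_edges_or_isCrossingEdge h1 h2 (hZ.mem_support hu) (hZ.mem_support hv) huv
    with hg | hg <;> rcases hdPQ with hd | hd
  · exact ⟨v, _, d, hZ.of_mem_edges hP (List.mem_cons_of_mem _ hd) hg hsubP, by simpa⟩
  · exact ⟨u, _, d, hZ.of_mem_edges hQ (List.mem_cons_of_mem _ hd) hg hsubQ, by simpa⟩
  · refine ⟨u, _, _, hZ.of_notMem_edges hQ ?_ (by simp) hg hsubQ, by simpa⟩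
    simpa [hdne] using hdisj hd
  · refine ⟨v, _, _, hZ.of_notMem_edges hP ?_ (by simp) hg hsubP, by simpa⟩
    simpa [Sym2.eq_swap, hdne] using fun h => hdisj h hd

theorem IsCrossingCycle.exists_chordless (h1 : IsChordlessCycle c1) (h2 : IsChordlessCycle c2)
    {r : V} {Z : G.Walk r r} {d : Sym2 V} (hZ : IsCrossingCycle c1 c2 Z d) :
    ∃ (w : V) (K : G.Walk w w) (g : Sym2 V), IsCrossingCycle c1 c2 K g ∧ IsChordlessCycle K := by
  induction hn : Z.length using Nat.strong_induction_on generalizing r Z d with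
  | _ n ih =>
    by_cases hch : IsChordlessCycle Z
    · exact ⟨r, Z, d, hZ, hch⟩
    · obtain ⟨w, K, g, hK, hlt⟩ := hZ.exists_shorter h1 h2 hch
      exact ih _ (hn ▸ hlt) hK rfl

theorem exists_isCrossingCycle {a x y : V} (ha1 : a ∈ c1.support) (ha2 : a ∈ c2.support)
    (hx1 : x ∈ c1.support) (hx2 : x ∉ c2.support) (hy2 : y ∈ c2.support) (hy1 : y ∉ c1.support)
    (hxy : G.Adj x y) :
    ∃ (w : V) (Z : G.Walk w w), IsCrossingCycle c1 c2 Z s(x, y) := by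
  classical
  have hcross : IsCrossingEdge c1 c2 s(x, y) := ⟨x, y, rfl, hx1, hx2, hy2, hy1⟩
  obtain ⟨p2, hp2⟩ := c2.exists_walk_edges_subset_of_mem_support hy2 ha2
  obtain ⟨p1, hp1⟩ := c1.exists_walk_edges_subset_of_mem_support ha1 hx1
  set p := (p2.append p1).bypass
  have hp : ∀ d ∈ p.edges, d ∈ c1.edges ∨ d ∈ c2.edges := by
    intro d hd
    have := (p2.append p1).edges_bypass_subset_edges hd
    rw [Walk.edges_append, List.mem_append] at this
    exact this.symm.imp (hp1 ·) (hp2 ·)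
  refine ⟨x, Walk.cons hxy p, ?_, by simp, hcross, ?_⟩
  · refine (Walk.cons_isCycle_iff p hxy).mpr ⟨(p2.append p1).bypass_isPath, fun h => ?_⟩
    exact (hp _ h).elim hcross.notMem_edges.1 hcross.notMem_edges.2
  · intro d hd
    rw [Walk.edges_cons, List.mem_cons] at hd
    exact hd.imp_right (hp d)

theorem IsCrossingCycle.length_le_three (hci : ChordlessCyclesShareAtMostOneEdge G)
    (h1 : IsChordlessCycle c1) (h2 : IsChordlessCycle c2) {r : V} {Z : G.Walk r r} {d : Sym2 V}
    (hZ : IsCrossingCycle c1 c2 Z d) (hZc : IsChordlessCycle Z) : Z.length ≤ 3 := by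
  set S := {e | e ∈ Z.edges}
  set S1 := {e | e ∈ c1.edges}
  set S2 := {e | e ∈ c2.edges}
  have hS : S ∈ chordlessCycleSets G := ⟨r, Z, hZc, rfl⟩
  have hdS : d ∈ S := hZ.mem_edges
  have hS1 := hci S hS S1 ⟨v1, c1, h1, rfl⟩ fun h =>
    hZ.isCrossingEdge.notMem_edges.1 (show d ∈ S1 from h ▸ hdS)
  have hS2 := hci S hS S2 ⟨v2, c2, h2, rfl⟩ fun h =>
    hZ.isCrossingEdge.notMem_edges.2 (show d ∈ S2 from h ▸ hdS)
  have hsub : S ⊆ insert d (S ∩ S1 ∪ S ∩ S2) := fun e he => by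
    rcases hZ.mem_edges_or e he with rfl | h | h
    exacts [Set.mem_insert _ _, Or.inr (Or.inl ⟨he, h⟩), Or.inr (Or.inr ⟨he, h⟩)]
  have hfin : (S ∩ S1 ∪ S ∩ S2).Finite :=
    (Z.edges.finite_toSet.inter_of_left _).union (Z.edges.finite_toSet.inter_of_left _)
  calc Z.length = S.ncard := hZ.isCycle.isCircuit.isTrail.ncard_edges.symm
    _ ≤ (insert d (S ∩ S1 ∪ S ∩ S2)).ncard := Set.ncard_le_ncard hsub (hfin.insert d)
    _ ≤ (S ∩ S1 ∪ S ∩ S2).ncard + 1 := Set.ncard_insert_le _ _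
    _ ≤ (S ∩ S1).ncard + (S ∩ S2).ncard + 1 := by gcongr; exact Set.ncard_union_le _ _
    _ ≤ 3 := by omega

end CrossingCycles

theorem no_edge_connecting_chordless_cycles_general {G : SimpleGraph V}
    (htf : TriangleFree G) (hci : ChordlessCyclesShareAtMostOneEdge G)
    {v1 v2 : V} (c1 : G.Walk v1 v1) (c2 : G.Walk v2 v2)
    (h1 : IsChordlessCycle c1) (h2 : IsChordlessCycle c2)
    (e : Sym2 V) (he1 : e ∈ c1.edges) (he2 : e ∈ c2.edges) :
    ∀ x y, x ∈ c1.support → x ∉ c2.support → y ∈ c2.support → y ∉ c1.support →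
      ¬ G.Adj x y := by
  intro x y hx1 hx2 hy2 hy1 hxy
  have ha1 := Walk.mem_support_of_mem_edges he1 e.out_fst_mem
  have ha2 := Walk.mem_support_of_mem_edges he2 e.out_fst_mem
  obtain ⟨w, Z, hZ⟩ := exists_isCrossingCycle ha1 ha2 hx1 hx2 hy2 hy1 hxy
  obtain ⟨r, K, g, hK, hKc⟩ := hZ.exists_chordless h1 h2
  exact htf r K hK.isCycle
    (le_antisymm (hK.length_le_three hci h1 h2 hKc) hK.isCycle.three_le_length)

/-- If two distinct chordless cycles `c1, c2` of a triangle-free graph satisfying the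
"at most one common edge" condition have a common edge `e`, then no edge of `G` joins a
vertex lying only on `c1` to a vertex lying only on `c2`. -/
theorem no_edge_connecting_chordless_cycles {G : SimpleGraph V}
    (htf : TriangleFree G) (hci : ChordlessCyclesShareAtMostOneEdge G)
    {v1 v2 : V} (c1 : G.Walk v1 v1) (c2 : G.Walk v2 v2)
    (h1 : IsChordlessCycle c1) (h2 : IsChordlessCycle c2)
    (hne : {e | e ∈ c1.edges} ≠ {e | e ∈ c2.edges})
    (e : Sym2 V) (he1 : e ∈ c1.edges) (he2 : e ∈ c2.edges) :
    ∀ x y, x ∈ c1.support → x ∉ c2.support → y ∈ c2.support → y ∉ c1.support →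
      ¬ G.Adj x y :=
  no_edge_connecting_chordless_cycles_general htf hci c1 c2 h1 h2 e he1 he2
end

section
/- Let G be a triangle-free graph in which any two chordless cycles share at most one edge. If an edge e of G lies on exactly one chordless cycle, then e is not a chord of any cycle of G. -/
open SimpleGraph
variable {V : Type*}

/-!
A chord `xy` of a cycle splits it into two `x`–`y` paths meeting only in `x` and `y`; closing
each of them with `xy` gives two shorter cycles through `xy`. Removing chords repeatedly, every
cycle through an edge contains, on its own vertices, a chordless cycle through that edge.
Applied to the two cycles cut out by a chord `xy`, this gives two chordless cycles through `xy`
whose vertex sets meet only in `{x, y}`; since a cycle has a third vertex, they are distinct.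
-/

namespace SimpleGraph.Walk

variable {G : SimpleGraph V} {u v w : V}

lemma two_le_length_of_ne_of_notMem_edges {p : G.Walk u w} (huw : u ≠ w)
    (hp : s(u, w) ∉ p.edges) : 2 ≤ p.length := by
  cases p with
  | nil => exact absurd rfl huw
  | cons h q => cases q with
    | nil => simp at hp
    | cons h' r => simp

lemma support_subset_support_of_edges_subset {w' : V} {p : G.Walk u v} {q : G.Walk w w'}
    (hp : ¬p.Nil) (hq : ¬q.Nil) (h : ∀ e ∈ p.edges, e ∈ q.edges) : p.support ⊆ q.support := by
  intro z hz
  obtain ⟨e, he, hze⟩ := (mem_support_iff_exists_mem_edges_of_not_nil hp).mp hz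
  exact (mem_support_iff_exists_mem_edges_of_not_nil hq).mpr ⟨e, h e he, hze⟩

lemma IsCycle.exists_mem_support_ne_ne {c : G.Walk v v} (hc : c.IsCycle) (x y : V) :
    ∃ z ∈ c.support, z ≠ x ∧ z ≠ y := by
  by_contra! h
  have hsub : c.support.tail ⊆ [x, y] := fun z hz =>
    List.mem_pair.mpr ((em (z = x)).imp_right (h z (List.mem_of_mem_tail hz)))
  have hlen := (List.subperm_of_subset hc.support_nodup hsub).length_le
  rw [List.length_tail, length_support] at hlen
  have := hc.three_le_length
  simp only [List.length_cons, List.length_nil] at hlen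
  omega

section

variable [DecidableEq V]

lemma IsCycle.isPath_dropUntil {c : G.Walk v v} (hc : c.IsCycle) (h : w ∈ c.support)
    (hvw : v ≠ w) : (c.dropUntil w h).IsPath := by
  rw [← c.take_spec h] at hc
  exact hc.isPath_of_append_right (not_nil_of_ne hvw)

lemma IsCycle.eq_or_eq_of_mem_takeUntil_of_mem_dropUntil {c : G.Walk v v} (hc : c.IsCycle)
    (h : w ∈ c.support) {z : V} (hz₁ : z ∈ (c.takeUntil w h).support)
    (hz₂ : z ∈ (c.dropUntil w h).support) : z = v ∨ z = w := by
  have hnd := hc.support_nodup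
  rw [← c.take_spec h, tail_support_append, List.nodup_append'] at hnd
  rw [← cons_tail_support] at hz₁ hz₂
  rcases List.mem_cons.mp hz₁ with rfl | hz₁
  · exact .inl rfl
  rcases List.mem_cons.mp hz₂ with rfl | hz₂
  · exact .inr rfl
  · exact (hnd.2.2 hz₁ hz₂).elim

lemma IsCycle.isCycle_cons_takeUntil {c : G.Walk v v} (hc : c.IsCycle) (h : w ∈ c.support)
    (hvw : G.Adj v w) (hne : s(v, w) ∉ c.edges) : (cons hvw.symm (c.takeUntil w h)).IsCycle := by
  rw [cons_isCycle_iff, Sym2.eq_swap]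
  exact ⟨hc.isPath_takeUntil h, fun he => hne (c.edges_takeUntil_subset_edges h he)⟩

lemma IsCycle.isCycle_cons_dropUntil {c : G.Walk v v} (hc : c.IsCycle) (h : w ∈ c.support)
    (hvw : G.Adj v w) (hne : s(v, w) ∉ c.edges) : (cons hvw (c.dropUntil w h)).IsCycle := by
  rw [cons_isCycle_iff]
  exact ⟨hc.isPath_dropUntil h hvw.ne, fun he => hne (c.edges_dropUntil_subset_edges h he)⟩

end

lemma IsCycle.exists_isCycle_length_lt_of_chord {c : G.Walk u u} (hc : c.IsCycle) {a b : V}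
    (ha : a ∈ c.support) (hb : b ∈ c.support) (hab : G.Adj a b) (hne : s(a, b) ∉ c.edges)
    {e : Sym2 V} (he : e ∈ c.edges) : ∃ (w : V) (d : G.Walk w w),
      d.IsCycle ∧ d.length < c.length ∧ e ∈ d.edges ∧ d.support ⊆ c.support := by
  classical
  set c' := c.rotate a ha
  have hc' : c'.IsCycle := hc.rotate ha
  have hb' : b ∈ c'.support := (c.mem_support_rotate_iff a ha).mpr hb
  have hne' : s(a, b) ∉ c'.edges := fun h => hne ((c.rotate_edges a ha).mem_iff.mp h)
  have hsupp : c'.support ⊆ c.support := fun z => (c.mem_support_rotate_iff a ha).mp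
  have hlen : (c'.takeUntil b hb').length + (c'.dropUntil b hb').length = c.length := by
    rw [← length_append, c'.take_spec hb', length_rotate]
  have hp : 2 ≤ (c'.takeUntil b hb').length := two_le_length_of_ne_of_notMem_edges hab.ne
    fun h => hne' (c'.edges_takeUntil_subset_edges hb' h)
  have hq : 2 ≤ (c'.dropUntil b hb').length := two_le_length_of_ne_of_notMem_edges hab.ne.symm
    fun h => hne' (c'.edges_dropUntil_subset_edges hb' (Sym2.eq_swap ▸ h))
  have he' : e ∈ (c'.takeUntil b hb').edges ∨ e ∈ (c'.dropUntil b hb').edges := by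
    rw [← List.mem_append, ← edges_append, c'.take_spec hb']
    exact (c.rotate_edges a ha).mem_iff.mpr he
  rcases he' with he' | he'
  · refine ⟨b, _, hc'.isCycle_cons_takeUntil hb' hab hne', by rw [length_cons]; omega,
      List.mem_cons_of_mem _ he', List.cons_subset.mpr ⟨hb, ?_⟩⟩
    exact List.Subset.trans (c'.support_takeUntil_subset_support hb') hsupp
  · refine ⟨a, _, hc'.isCycle_cons_dropUntil hb' hab hne', by rw [length_cons]; omega,
      List.mem_cons_of_mem _ he', List.cons_subset.mpr ⟨ha, ?_⟩⟩
    exact List.Subset.trans (c'.support_dropUntil_subset_support hb') hsupp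

lemma IsCycle.exists_isChordlessCycle_mem_edges {c : G.Walk u u} (hc : c.IsCycle) {e : Sym2 V}
    (he : e ∈ c.edges) : ∃ (w : V) (d : G.Walk w w),
      IsChordlessCycle d ∧ e ∈ d.edges ∧ d.support ⊆ c.support := by
  induction hn : c.length using Nat.strong_induction_on generalizing u with
  | _ n ih =>
  by_cases hchord :
      ∀ a b, a ∈ c.support → b ∈ c.support → G.Adj a b → s(a, b) ∈ c.edges
  · exact ⟨u, c, ⟨hc, hchord⟩, he, List.Subset.refl _⟩
  push Not at hchord
  obtain ⟨a, b, ha, hb, hab, hne⟩ := hchord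
  obtain ⟨w, d, hd, hlt, hed, hsub⟩ := hc.exists_isCycle_length_lt_of_chord ha hb hab hne he
  obtain ⟨w', d', hd', hed', hsub'⟩ := ih _ (hn ▸ hlt) hd hed rfl
  exact ⟨w', d', hd', hed', List.Subset.trans hsub' hsub⟩

end SimpleGraph.Walk

theorem edge_on_unique_chordless_cycle_not_chord_general {G : SimpleGraph V}
    (e : Sym2 V) (he : e ∈ G.edgeSet)
    (huniq : {S ∈ chordlessCycleSets G | e ∈ S}.ncard = 1) :
    ∀ (v : V) (c : G.Walk v v), c.IsCycle →
      ∀ x y, e = s(x, y) → x ∈ c.support → y ∈ c.support → e ∈ c.edges := by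
  classical
  rintro v c hc x y rfl hx hy
  by_contra hxy
  rw [mem_edgeSet] at he
  set c' := c.rotate x hx
  have hc' : c'.IsCycle := hc.rotate hx
  have hy' : y ∈ c'.support := (c.mem_support_rotate_iff x hx).mpr hy
  have hxy' : s(x, y) ∉ c'.edges := fun h => hxy ((c.rotate_edges x hx).mem_iff.mp h)
  obtain ⟨_, d₁, hd₁, he₁, hsub₁⟩ :=
    (hc'.isCycle_cons_takeUntil hy' he hxy').exists_isChordlessCycle_mem_edges
      (e := s(x, y)) (by simp [Sym2.eq_swap])
  obtain ⟨_, d₂, hd₂, he₂, hsub₂⟩ :=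
    (hc'.isCycle_cons_dropUntil hy' he hxy').exists_isChordlessCycle_mem_edges
      (e := s(x, y)) (by simp)
  have hunique : {S ∈ chordlessCycleSets G | s(x, y) ∈ S}.Subsingleton := by
    obtain ⟨S, hS⟩ := Set.ncard_eq_one.mp huniq
    exact hS ▸ Set.subsingleton_singleton
  have hedges : {f | f ∈ d₁.edges} = {f | f ∈ d₂.edges} :=
    hunique ⟨⟨_, d₁, hd₁, rfl⟩, he₁⟩ ⟨⟨_, d₂, hd₂, rfl⟩, he₂⟩
  obtain ⟨z, hz, hzx, hzy⟩ := hd₁.1.exists_mem_support_ne_ne x y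
  have hz₁ := hsub₁ hz
  have hz₂ := hsub₂ <| Walk.support_subset_support_of_edges_subset hd₁.1.not_nil
    hd₂.1.not_nil (fun f => (Set.ext_iff.mp hedges f).mp) hz
  simp only [Walk.support_cons, List.mem_cons, hzx, hzy, false_or] at hz₁ hz₂
  exact (hc'.eq_or_eq_of_mem_takeUntil_of_mem_dropUntil hy' hz₁ hz₂).elim hzx hzy

/-- In a triangle-free graph in which any two chordless cycles share at most one edge,
an edge lying on exactly one chordless cycle is not a chord of any cycle: whenever both
endpoints of such an edge lie on a cycle, the edge is an edge of that cycle. -/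
theorem edge_on_unique_chordless_cycle_not_chord [Fintype V] {G : SimpleGraph V}
    (htf : TriangleFree G) (hci : ChordlessCyclesShareAtMostOneEdge G)
    (e : Sym2 V) (he : e ∈ G.edgeSet)
    (huniq : {S ∈ chordlessCycleSets G | e ∈ S}.ncard = 1) :
    ∀ (v : V) (c : G.Walk v v), c.IsCycle →
      ∀ x y, e = s(x, y) → x ∈ c.support → y ∈ c.support → e ∈ c.edges :=
  edge_on_unique_chordless_cycle_not_chord_general e he huniq
end

section
/- For any connected finite simple graph G, the number of chordless cycles of G is at least e(G) − v(G) + 1. -/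
open SimpleGraph
variable {V : Type*}

/-!
Over `𝔽₂`, the edge-indicator vector of every cycle lies in the span of the indicator vectors
of chordless cycles: a chord `xy` of a cycle based at `x` splits it into two shorter cycles
through `xy`, and their indicators sum to that of the original cycle because `xy` is counted
twice. For a spanning tree `T`, each edge `f ∉ T` closes a cycle whose only non-tree edge is
`f`; these fundamental cycles are independent, so the chordless cycles span a space of
dimension at least `e(G) - e(T) = e(G) - v(G) + 1`.
-/

theorem Submodule.ncard_le_finrank_of_forall_exists_domRestrict_eq_single {ι R : Type*}
    [Field R] [Finite ι] [DecidableEq ι] {W : Submodule R (ι → R)} {K : Set ι}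
    (h : ∀ f : K, ∃ w ∈ W, K.domRestrict w = Pi.single f 1) : K.ncard ≤ Module.finrank R W := by
  choose w hwW hw using h
  let restrictW : W →ₗ[R] K → R := (LinearMap.funLeft R R Subtype.val).comp W.subtype
  have hind : LinearIndependent R fun f ↦ (⟨w f, hwW f⟩ : W) := by
    refine .of_comp restrictW ?_
    convert (Pi.basisFun R K).linearIndependent
    ext f : 1
    rw [Pi.basisFun_apply, ← hw f]
    rfl
  have := Fintype.ofFinite K
  rw [Set.ncard_eq_toFinset_card', Set.toFinset_card]
  exact hind.fintype_card_le_finrank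

lemma Set.indicator_insert_add_indicator_insert {α R : Type*} [Ring R] [CharP R 2] {f : α}
    {A B : Set α} (hA : f ∉ A) (hB : f ∉ B) (hAB : Disjoint A B) :
    (insert f A).indicator (1 : α → R) + (insert f B).indicator 1 = (A ∪ B).indicator 1 := by
  ext e
  by_cases hf : e = f
  · subst hf
    simpa [hA, hB] using CharTwo.add_self_eq_zero (1 : R)
  · by_cases heA : e ∈ A <;> by_cases heB : e ∈ B <;> simp_all
    exact absurd heB (hAB.notMem_of_mem_left heA)

namespace SimpleGraph

variable {G : SimpleGraph V}

namespace Walk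

noncomputable def edgeIndicator {u v : V} (p : G.Walk u v) : Sym2 V → ZMod 2 :=
  {e | e ∈ p.edges}.indicator 1

variable {x y : V} {P : G.Walk x y} {Q : G.Walk y x}

lemma IsCycle.isCycle_cons_reverse_of_append (hc : (P.append Q).IsCycle) (hxy : G.Adj x y)
    (hch : s(x, y) ∉ (P.append Q).edges) : (cons hxy P.reverse).IsCycle := by
  have hP : P.IsPath := hc.isPath_of_append_left (not_nil_of_ne hxy.ne.symm)
  refine (cons_isCycle_iff _ hxy).2 ⟨hP.reverse, fun h ↦ hch ?_⟩
  simp_all [edges_append]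

lemma IsCycle.isCycle_cons_of_append (hc : (P.append Q).IsCycle) (hxy : G.Adj x y)
    (hch : s(x, y) ∉ (P.append Q).edges) : (cons hxy Q).IsCycle := by
  have hQ : Q.IsPath := hc.isPath_of_append_right (not_nil_of_ne hxy.ne)
  refine (cons_isCycle_iff _ hxy).2 ⟨hQ, fun h ↦ hch ?_⟩
  simp_all [edges_append]

lemma IsTrail.edgeIndicator_append_eq_add (hc : (P.append Q).IsTrail) (hxy : G.Adj x y)
    (hch : s(x, y) ∉ (P.append Q).edges) :
    (P.append Q).edgeIndicator =
      (cons hxy P.reverse).edgeIndicator + (cons hxy Q).edgeIndicator := by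
  have hdisj : Disjoint {e | e ∈ P.edges} {e | e ∈ Q.edges} := by
    have := hc.edges_nodup
    rw [edges_append] at this
    exact Set.disjoint_left.2 fun e h₁ h₂ ↦ List.disjoint_of_nodup_append this h₁ h₂
  rw [edges_append] at hch
  have := Set.indicator_insert_add_indicator_insert (R := ZMod 2) (f := s(x, y))
    (A := {e | e ∈ P.edges}) (B := {e | e ∈ Q.edges}) (by simp_all) (by simp_all) hdisj
  have hcons {z : V} (R : G.Walk y z) :
      {e | e ∈ (cons hxy R).edges} = insert s(x, y) {e | e ∈ R.edges} := by
    ext; simp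
  rw [edgeIndicator, edgeIndicator, edgeIndicator, hcons, hcons]
  simpa [edges_append, Set.ofPred_or] using this.symm

lemma edgeIndicator_rotate [DecidableEq V] {u v : V} {c : G.Walk v v} (h : u ∈ c.support) :
    (c.rotate u h).edgeIndicator = c.edgeIndicator := by
  simp only [edgeIndicator, (c.rotate_edges u h).perm.mem_iff]

end Walk

open Walk

noncomputable def chordlessCycleSpan (G : SimpleGraph V) : Submodule (ZMod 2) (Sym2 V → ZMod 2) :=
  Submodule.span (ZMod 2) ((·.indicator 1) '' chordlessCycleSets G)

theorem Walk.IsCycle.edgeIndicator_mem_chordlessCycleSpan {v : V} {c : G.Walk v v}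
    (hc : c.IsCycle) : c.edgeIndicator ∈ chordlessCycleSpan G := by
  classical
  induction hn : c.length using Nat.strong_induction_on generalizing v c with
  | _ n ih =>
  by_cases hchordless : IsChordlessCycle c
  · exact Submodule.subset_span ⟨_, ⟨v, c, hchordless, rfl⟩, rfl⟩
  obtain ⟨x, y, hx, hy, hxy, hch⟩ :
      ∃ x y, x ∈ c.support ∧ y ∈ c.support ∧ G.Adj x y ∧ s(x, y) ∉ c.edges := by
    simpa [IsChordlessCycle, hc] using hchordless
  set d := c.rotate x hx
  have hyd : y ∈ d.support := (mem_support_rotate_iff ..).2 hy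
  set P := d.takeUntil y hyd
  set Q := d.dropUntil y hyd
  have hPQ : P.append Q = d := d.take_spec hyd
  have hd : (P.append Q).IsCycle := hPQ ▸ hc.rotate hx
  have hchd : s(x, y) ∉ (P.append Q).edges :=
    hPQ ▸ fun h ↦ hch ((c.rotate_edges x hx).perm.mem_iff.1 h)
  have h₁ := hd.isCycle_cons_reverse_of_append hxy hchd
  have h₂ := hd.isCycle_cons_of_append hxy hchd
  have hlen : P.length + Q.length = n := by rw [← length_append, hPQ, length_rotate, hn]
  have hlen₁ := h₁.three_le_length
  have hlen₂ := h₂.three_le_length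
  simp only [length_cons, length_reverse] at hlen₁ hlen₂
  rw [← edgeIndicator_rotate hx, show c.rotate x hx = P.append Q from hPQ.symm,
    hd.isTrail.edgeIndicator_append_eq_add hxy hchd]
  exact add_mem (ih _ (by simp; omega) h₁ rfl) (ih _ (by simp; omega) h₂ rfl)

lemma Reachable.exists_isCycle_of_le_of_adj {T : SimpleGraph V} {x y : V}
    (hreach : T.Reachable x y) (hle : T ≤ G) (hxy : G.Adj x y) (hnT : ¬T.Adj x y) :
    ∃ C : G.Walk y y,
      C.IsCycle ∧ s(x, y) ∈ C.edges ∧ ∀ e ∈ C.edges, e = s(x, y) ∨ e ∈ T.edgeSet := by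
  obtain ⟨p, hp⟩ := hreach.exists_isPath
  have hpT : ∀ e ∈ (p.mapLe hle).edges, e ∈ T.edgeSet := by
    rw [edges_mapLe_eq_edges]
    exact p.edges_subset_edgeSet
  refine ⟨cons hxy.symm (p.mapLe hle), (cons_isCycle_iff _ _).2 ⟨hp.mapLe hle, fun h ↦ ?_⟩,
    by simp [Sym2.eq_swap], ?_⟩
  · exact hnT (T.adj_symm (hpT _ h))
  · simp only [edges_cons, List.mem_cons]
    rintro e (rfl | he)
    · exact .inl Sym2.eq_swap
    · exact .inr (hpT e he)

theorem ncard_edgeSet_sdiff_le_finrank_chordlessCycleSpan [Finite V] {T : SimpleGraph V}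
    (hT : T.Connected) (hle : T ≤ G) :
    (G.edgeSet \ T.edgeSet).ncard ≤ Module.finrank (ZMod 2) (chordlessCycleSpan G) := by
  classical
  refine Submodule.ncard_le_finrank_of_forall_exists_domRestrict_eq_single fun ⟨f, hfG, hfT⟩ ↦ ?_
  induction f using Sym2.ind with | _ x y =>
  obtain ⟨C, hC, hfC, hCT⟩ := (hT.preconnected x y).exists_isCycle_of_le_of_adj hle hfG hfT
  refine ⟨C.edgeIndicator, hC.edgeIndicator_mem_chordlessCycleSpan, ?_⟩
  ext ⟨g, -, hgT⟩
  have : g ∈ C.edges ↔ g = s(x, y) := ⟨fun hg ↦ (hCT g hg).resolve_right hgT, (· ▸ hfC)⟩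
  simp [Set.domRestrict, edgeIndicator, Pi.single_apply, Set.indicator_apply, Subtype.ext_iff,
    this]

theorem finrank_chordlessCycleSpan_le [Finite V] (G : SimpleGraph V) :
    Module.finrank (ZMod 2) (chordlessCycleSpan G) ≤ (chordlessCycleSets G).ncard := by
  set S : Set (Sym2 V → ZMod 2) := (·.indicator 1) '' chordlessCycleSets G
  have := Fintype.ofFinite S
  calc Module.finrank (ZMod 2) (chordlessCycleSpan G) ≤ S.toFinset.card := finrank_span_le_card S
    _ = S.ncard := (Set.ncard_eq_toFinset_card' S).symm
    _ ≤ (chordlessCycleSets G).ncard := Set.ncard_image_le (Set.toFinite _)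

end SimpleGraph

/-- Any connected finite graph has at least `e(G) - v(G) + 1` chordless cycles. -/
theorem card_chordless_cycles_ge [Fintype V] {G : SimpleGraph V}
    (hconn : G.Connected) :
    (G.edgeSet.ncard : ℤ) - (Nat.card V : ℤ) + 1 ≤ ((chordlessCycleSets G).ncard : ℤ) := by
  obtain ⟨T, hle, hT⟩ := hconn.exists_isTree_le
  have hcycles := ncard_edgeSet_sdiff_le_finrank_chordlessCycleSpan hT.connected hle
  have hspan := finrank_chordlessCycleSpan_le G
  have htree : T.edgeSet.ncard + 1 = Nat.card V := (isTree_iff_connected_and_card.1 hT).2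
  have hsplit := Set.ncard_sdiff_add_ncard_of_subset (edgeSet_mono hle) (Set.toFinite _)
  omega
end

section
/- If a connected finite simple graph G contains two chordless cycles having more than one common edge, then the number of chordless cycles of G is strictly greater than e(G) − v(G) + 1. -/
open SimpleGraph
variable {V : Type*}

/-!
Over `ZMod 2`, edge vectors of cycles lie in the kernel of the incidence map `∂`, which has
dimension at least `e(G) - v(G) + 1`. Splitting a cycle along a chord writes it as the sum of two
shorter cycles whose lengths add up to its length plus `2`, and a nonempty even edge set contains a
cycle (a forest with an edge has a leaf, and a leaf has odd degree). By induction, every `x ∈ ker ∂`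
with support `X` is a sum of distinct chordless cycles `S` with `∑ (|S| - 2) ≤ |X| - 2`. Hence the
chordless cycles span `ker ∂`, so there are at least `e(G) - v(G) + 1` of them. If they were
linearly independent, the only such decomposition of `S₁ + S₂` would be `{S₁, S₂}`, and the bound
would read `|S₁| + |S₂| - 4 ≤ |S₁ ∆ S₂| - 2 = |S₁| + |S₂| - 2 |S₁ ∩ S₂| - 2`,
i.e. `|S₁ ∩ S₂| ≤ 1`.
-/

open scoped symmDiff

theorem Finset.sum_symmDiff_eq_add {ι M : Type*} [DecidableEq ι] [AddCommGroup M]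
    [Module (ZMod 2) M] (A B : Finset ι) (f : ι → M) :
    ∑ i ∈ A ∆ B, f i = ∑ i ∈ A, f i + ∑ i ∈ B, f i := by
  rw [← Finset.sum_union_inter, symmDiff_eq_sup_sdiff_inf,
    ← Finset.sum_sdiff (Finset.inter_subset_union (s := A) (t := B)), add_assoc,
    ZModModule.add_self, add_zero]
  rfl

theorem Finset.sum_symmDiff_le_add {ι M : Type*} [DecidableEq ι] [AddCommMonoid M]
    [PartialOrder M] [IsOrderedAddMonoid M] [CanonicallyOrderedAdd M] (A B : Finset ι) (f : ι → M) :
    ∑ i ∈ A ∆ B, f i ≤ ∑ i ∈ A, f i + ∑ i ∈ B, f i :=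
  calc ∑ i ∈ A ∆ B, f i ≤ ∑ i ∈ A ∪ B, f i :=
        Finset.sum_le_sum_of_subset Finset.symmDiff_subset_union
    _ ≤ ∑ i ∈ A ∪ B, f i + ∑ i ∈ A ∩ B, f i := le_self_add
    _ = ∑ i ∈ A, f i + ∑ i ∈ B, f i := Finset.sum_union_inter

theorem LinearIndependent.finset_eq_of_sum_eq {ι R M : Type*} [DecidableEq ι] [Semiring R]
    [Nontrivial R] [AddCommMonoid M] [Module R M] {v : ι → M} (hv : LinearIndependent R v)
    {A B : Finset ι} (h : ∑ i ∈ A, v i = ∑ i ∈ B, v i) : A = B := by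
  have key := linearIndependent_iff'ₛ.mp hv (A ∪ B) (fun i => if i ∈ A then 1 else 0)
    (fun i => if i ∈ B then 1 else 0) (by
      simp only [ite_smul, one_smul, zero_smul, Finset.sum_ite_mem, Finset.union_inter_cancel_left,
        Finset.union_inter_cancel_right, h])
  ext i
  by_cases hi : i ∈ A ∪ B
  · have := key i hi
    by_cases hA : i ∈ A <;> by_cases hB : i ∈ B <;> simp_all
  · simp_all

theorem List.Nodup.ncard_setOf_mem_and {α : Type*} {l : List α} (hl : l.Nodup) (p : α → Prop)
    [DecidablePred p] : {a | a ∈ l ∧ p a}.ncard = l.countP (p ·) := by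
  classical
  have : {a | a ∈ l ∧ p a} = ↑(l.filter (p ·)).toFinset := by ext; simp
  rw [this, Set.ncard_coe_finset, List.toFinset_card_of_nodup (hl.filter _),
    List.countP_eq_length_filter]

theorem Set.ncard_symmDiff_add_two_mul_ncard_inter {α : Type*} {S T : Set α} (hS : S.Finite)
    (hT : T.Finite) : (S ∆ T).ncard + 2 * (S ∩ T).ncard = S.ncard + T.ncard := by
  rw [Set.symmDiff_def, Set.ncard_union_eq disjoint_sdiff_sdiff hS.sdiff hT.sdiff,
    ← Set.ncard_inter_add_ncard_sdiff_eq_ncard S T hS,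
    ← Set.ncard_inter_add_ncard_sdiff_eq_ncard T S hT, Set.inter_comm T S]
  ring

namespace SimpleGraph

theorem IsAcyclic.exists_existsUnique_adj [Finite V] {G : SimpleGraph V} (hG : G.IsAcyclic)
    {u v : V} (huv : G.Adj u v) : ∃ a, ∃! b, G.Adj a b := by
  classical
  have := Fintype.ofFinite V
  let IsPathLength (n : ℕ) : Prop := ∃ (a b : V) (p : G.Walk a b), p.IsPath ∧ p.length = n
  have hbound {n : ℕ} (hn : IsPathLength n) : n ≤ Fintype.card V := by
    obtain ⟨_, _, p, hp, rfl⟩ := hn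
    exact hp.length_lt.le
  have hedge : IsPathLength 1 := ⟨u, v, huv.toWalk, by simp [huv.ne], rfl⟩
  obtain ⟨a, b, p, hp, hlen⟩ := Nat.findGreatest_spec (hbound hedge) hedge
  have hmax (n : ℕ) (hn : IsPathLength n) : n ≤ p.length :=
    hlen ▸ Nat.le_findGreatest (hbound hn) hn
  have hnil : ¬ p.Nil := Walk.not_nil_iff_lt_length.mpr (hmax 1 hedge)
  refine ⟨a, p.snd, p.adj_snd hnil, fun w haw => ?_⟩
  by_cases hw : w ∈ p.support
  · exact hG.eq_snd_of_adj_start hp haw hw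
  · have := hmax _ ⟨w, b, .cons haw.symm p, hp.cons hw, rfl⟩
    simp only [Walk.length_cons] at this
    omega

namespace Walk

variable {G : SimpleGraph V}

theorem IsTrail.ncard_edgeSet {u v : V} {p : G.Walk u v} (hp : p.IsTrail) :
    p.edgeSet.ncard = p.length := by
  classical
  simpa [edgeSet] using hp.edges_nodup.ncard_setOf_mem_and (fun _ => True)

theorem IsCycle.exists_split_of_chord {v x y : V} {c : G.Walk v v} (hc : c.IsCycle)
    (hx : x ∈ c.support) (hy : y ∈ c.support) (hxy : G.Adj x y) (hchord : s(x, y) ∉ c.edges) :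
    ∃ (c₁ : G.Walk x x) (c₂ : G.Walk y y), c₁.IsCycle ∧ c₂.IsCycle ∧
      c₁.length + c₂.length = c.length + 2 ∧ c₁.edgeSet ∆ c₂.edgeSet = c.edgeSet := by
  classical
  set c' := c.rotate x hx
  have hc' : c'.IsCycle := hc.rotate hx
  have hmem (e : Sym2 V) : e ∈ c'.edges ↔ e ∈ c.edges := (c.rotate_edges x hx).mem_iff
  have hy' : y ∈ c'.support := (c.mem_support_rotate_iff x hx).mpr hy
  set p := c'.takeUntil y hy'
  set q := c'.dropUntil y hy'
  have hpq : p.append q = c' := c'.take_spec hy'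
  have hp : p.IsPath := hc'.isPath_takeUntil hy'
  have hq : q.IsPath := (hpq ▸ hc').isPath_of_append_right (not_nil_of_ne hxy.ne)
  have hedges : c'.edges = p.edges ++ q.edges := by rw [← hpq, edges_append]
  have hdisj : p.edges.Disjoint q.edges := by
    have := hc'.edges_nodup
    rw [hedges, List.nodup_append'] at this
    exact this.2.2
  have hchord' : s(x, y) ∉ c'.edges := by rwa [hmem]
  rw [hedges, List.mem_append, not_or] at hchord'
  refine ⟨.cons hxy q, .cons hxy.symm p, (cons_isCycle_iff q hxy).mpr ⟨hq, hchord'.2⟩,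
    (cons_isCycle_iff p hxy.symm).mpr ⟨hp, Sym2.eq_swap ▸ hchord'.1⟩, ?_, ?_⟩
  · have := congrArg length hpq
    simp only [length_append, length_rotate, c'] at this
    simp only [length_cons]
    omega
  · ext e
    have := hmem e
    simp only [edgeSet, edges_cons, hedges, Set.mem_symmDiff, Set.mem_ofPred_eq, List.mem_cons,
      List.mem_append, Sym2.eq_swap (a := y)] at this ⊢
    have := @hdisj e
    grind

end Walk

variable (G : SimpleGraph V)

noncomputable def edgeVec (S : Set (Sym2 V)) : G.edgeSet → ZMod 2 :=
  (Subtype.val ⁻¹' S).indicator 1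

theorem edgeVec_symmDiff (S T : Set (Sym2 V)) :
    G.edgeVec (S ∆ T) = G.edgeVec S + G.edgeVec T := by
  ext e
  by_cases hS : (e : Sym2 V) ∈ S <;> by_cases hT : (e : Sym2 V) ∈ T <;>
    simp [edgeVec, Set.mem_symmDiff, hS, hT]
  rfl

theorem edgeVec_image_support (x : G.edgeSet → ZMod 2) :
    G.edgeVec (Subtype.val '' {e | x e ≠ 0}) = x := by
  ext e
  rw [edgeVec, Set.preimage_image_eq _ Subtype.val_injective]
  obtain h | h : x e = 0 ∨ x e = 1 := by generalize x e = a; revert a; decide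
  all_goals simp [h]

theorem exists_chordless_sum_eq_edgeVec_edgeSet {u : V} (c : G.Walk u u) (hc : c.IsCycle) :
    ∃ A : Finset (chordlessCycleSets G), ∑ S ∈ A, G.edgeVec S = G.edgeVec c.edgeSet ∧
      ∑ S ∈ A, ((S : Set (Sym2 V)).ncard - 2) ≤ c.length - 2 := by
  classical
  induction hn : c.length using Nat.strong_induction_on generalizing u with | _ n ih => ?_
  by_cases hcl : IsChordlessCycle c
  · refine ⟨{⟨c.edgeSet, u, c, hcl, rfl⟩}, by simp, ?_⟩
    simp [hc.isTrail.ncard_edgeSet, hn]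
  obtain ⟨x, y, hx, hy, hxy, hchord⟩ :
      ∃ x y, x ∈ c.support ∧ y ∈ c.support ∧ G.Adj x y ∧ s(x, y) ∉ c.edges := by
    simpa [IsChordlessCycle, hc] using hcl
  obtain ⟨c₁, c₂, hc₁, hc₂, hlen, hedges⟩ := hc.exists_split_of_chord hx hy hxy hchord
  have := hc₁.three_le_length
  have := hc₂.three_le_length
  obtain ⟨A₁, hsum₁, hex₁⟩ := ih _ (by omega) c₁ hc₁ rfl
  obtain ⟨A₂, hsum₂, hex₂⟩ := ih _ (by omega) c₂ hc₂ rfl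
  refine ⟨A₁ ∆ A₂, ?_, ?_⟩
  · rw [Finset.sum_symmDiff_eq_add, hsum₁, hsum₂, ← edgeVec_symmDiff, hedges]
  · have := Finset.sum_symmDiff_le_add A₁ A₂ fun S => (S : Set (Sym2 V)).ncard - 2
    omega

section CycleSpace

open Module

variable [Fintype V] [DecidableEq V] [DecidableRel G.Adj]

def boundary : (G.edgeSet → ZMod 2) →ₗ[ZMod 2] V → ZMod 2 :=
  ((G.incMatrix (ZMod 2)).submatrix _root_.id (↑)).mulVecLin

theorem boundary_apply (x : G.edgeSet → ZMod 2) (v : V) :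
    G.boundary x v = ∑ e : G.edgeSet, G.incMatrix (ZMod 2) v e * x e := rfl

theorem sum_boundary_apply_eq_zero (x : G.edgeSet → ZMod 2) : ∑ v, G.boundary x v = 0 := by
  simp only [boundary_apply]
  rw [Finset.sum_comm]
  refine Finset.sum_eq_zero fun e _ => ?_
  rw [← Finset.sum_mul, G.sum_incMatrix_apply_of_mem_edgeSet e.2, show (2 : ZMod 2) = 0 from rfl,
    zero_mul]

theorem card_edgeSet_lt_finrank_ker_boundary_add_card [Nonempty V] :
    Fintype.card G.edgeSet < finrank (ZMod 2) (LinearMap.ker G.boundary) + Fintype.card V := by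
  have hrange : LinearMap.range G.boundary ≠ ⊤ := fun htop => by
    obtain ⟨x, hx⟩ := htop ▸ Submodule.mem_top (x := Pi.single (Classical.arbitrary V) 1)
    have := G.sum_boundary_apply_eq_zero x
    rw [hx, Finset.sum_pi_single'] at this
    simp at this
  have := Submodule.finrank_lt hrange
  rw [finrank_fintype_fun_eq_card] at this
  have := G.boundary.finrank_range_add_finrank_ker
  rw [finrank_fintype_fun_eq_card] at this
  omega

theorem boundary_edgeVec_apply (S : Set (Sym2 V)) (v : V) :
    G.boundary (G.edgeVec S) v = ((S ∩ G.incidenceSet v).ncard : ZMod 2) := by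
  classical
  have hsub : S ∩ G.incidenceSet v ⊆ Set.range ((↑) : G.edgeSet → Sym2 V) :=
    fun e he => ⟨⟨e, he.2.1⟩, rfl⟩
  rw [← Set.ncard_preimage_of_injective_subset_range Subtype.val_injective hsub,
    Set.ncard_eq_toFinset_card', Set.preimage, Set.toFinset_ofPred, ← Finset.sum_boole,
    boundary_apply]
  refine Finset.sum_congr rfl fun e _ => ?_
  simp [edgeVec, incMatrix_apply, Set.indicator_apply, ite_and]

theorem boundary_edgeVec_edgeSet_of_isTrail {u : V} {c : G.Walk u u} (hc : c.IsTrail) :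
    G.boundary (G.edgeVec c.edgeSet) = 0 := by
  ext v
  have hinc : c.edgeSet ∩ G.incidenceSet v = {e | e ∈ c.edges ∧ v ∈ e} := by
    ext e
    simp only [incidenceSet, Walk.edgeSet, Set.mem_inter_iff, Set.mem_ofPred_eq]
    exact ⟨fun h => ⟨h.1, h.2.2⟩, fun h => ⟨h.1, c.edges_subset_edgeSet h.1, h.2⟩⟩
  rw [boundary_edgeVec_apply, hinc, hc.edges_nodup.ncard_setOf_mem_and, Pi.zero_apply,
    ZMod.natCast_eq_zero_iff_even]
  exact (hc.even_countP_edges_iff v).mpr fun h => (h rfl).elim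

theorem exists_isCycle_edgeSet_subset {X : Set (Sym2 V)} (hX : X ⊆ G.edgeSet)
    (hne : X.Nonempty) (hbd : G.boundary (G.edgeVec X) = 0) :
    ∃ (u : V) (c : G.Walk u u), c.IsCycle ∧ c.edgeSet ⊆ X := by
  have hHG : fromEdgeSet X ≤ G := fun a b h => hX ((fromEdgeSet_adj X).mp h).1
  by_contra hno
  have hacyc : (fromEdgeSet X).IsAcyclic := fun u c hc => by
    refine hno ⟨u, c.mapLe hHG, hc.mapLe hHG, ?_⟩
    intro e he
    rw [Walk.edgeSet, Set.mem_ofPred_eq, Walk.edges_mapLe_eq_edges] at he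
    exact (edgeSet_fromEdgeSet X ▸ c.edges_subset_edgeSet he).1
  obtain ⟨e, he⟩ := hne
  induction e using Sym2.ind with | _ a b => ?_
  obtain ⟨u, w, huw, hw⟩ :=
    hacyc.exists_existsUnique_adj ((fromEdgeSet_adj X).mpr ⟨he, (hX he).ne⟩)
  have hinc : X ∩ G.incidenceSet u = {s(u, w)} := by
    ext e
    simp only [Set.mem_inter_iff, incidenceSet, Set.mem_ofPred_eq, Set.mem_singleton_iff]
    constructor
    · rintro ⟨heX, heG, hue⟩
      obtain ⟨z, rfl⟩ := Sym2.mem_iff_exists.mp hue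
      rw [hw z ((fromEdgeSet_adj X).mpr ⟨heX, (G.mem_edgeSet.mp heG).ne⟩)]
    · rintro rfl
      have := ((fromEdgeSet_adj X).mp huw).1
      exact ⟨this, hX this, Sym2.mem_mk_left u w⟩
  have := congrFun hbd u
  rw [boundary_edgeVec_apply, hinc, Set.ncard_singleton, Nat.cast_one] at this
  exact one_ne_zero this

theorem exists_chordless_sum_eq_edgeVec {X : Set (Sym2 V)} (hX : X ⊆ G.edgeSet)
    (hbd : G.boundary (G.edgeVec X) = 0) :
    ∃ A : Finset (chordlessCycleSets G), ∑ S ∈ A, G.edgeVec S = G.edgeVec X ∧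
      ∑ S ∈ A, ((S : Set (Sym2 V)).ncard - 2) ≤ X.ncard - 2 := by
  classical
  induction hn : X.ncard using Nat.strong_induction_on generalizing X with | _ n ih => ?_
  obtain rfl | hne := X.eq_empty_or_nonempty
  · exact ⟨∅, by ext; simp [edgeVec], by simp⟩
  obtain ⟨u, c, hc, hcX⟩ := G.exists_isCycle_edgeSet_subset hX hne hbd
  have hvec : G.edgeVec (X \ c.edgeSet) = G.edgeVec X + G.edgeVec c.edgeSet := by
    rw [← edgeVec_symmDiff, symmDiff_of_ge hcX]
  have hbd' : G.boundary (G.edgeVec (X \ c.edgeSet)) = 0 := by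
    rw [hvec, map_add, hbd, G.boundary_edgeVec_edgeSet_of_isTrail hc.isTrail, add_zero]
  have hcard : (X \ c.edgeSet).ncard + c.length = n := by
    rw [← hc.isTrail.ncard_edgeSet, Set.ncard_sdiff_add_ncard_of_subset hcX, hn]
  have := hc.three_le_length
  obtain ⟨A, hsumA, hexA⟩ := ih _ (by omega) (Set.sdiff_subset.trans hX) hbd' rfl
  obtain ⟨B, hsumB, hexB⟩ := G.exists_chordless_sum_eq_edgeVec_edgeSet c hc
  refine ⟨A ∆ B, ?_, ?_⟩
  · rw [Finset.sum_symmDiff_eq_add, hsumA, hsumB, hvec, add_assoc, ZModModule.add_self,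
      add_zero]
  · have := Finset.sum_symmDiff_le_add A B fun S => (S : Set (Sym2 V)).ncard - 2
    omega

theorem ker_boundary_le_span_edgeVec_chordless :
    LinearMap.ker G.boundary ≤
      Submodule.span (ZMod 2) (Set.range fun S : chordlessCycleSets G => G.edgeVec S) := by
  intro x hx
  obtain ⟨A, hA, -⟩ := G.exists_chordless_sum_eq_edgeVec (X := Subtype.val '' {e | x e ≠ 0})
    (by rintro _ ⟨e, -, rfl⟩; exact e.2) (by rwa [edgeVec_image_support])
  rw [← edgeVec_image_support G x, ← hA]
  exact Submodule.sum_mem _ fun S _ => Submodule.subset_span ⟨S, rfl⟩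

theorem not_linearIndependent_edgeVec_chordless {S₁ S₂ : Set (Sym2 V)}
    (h₁ : S₁ ∈ chordlessCycleSets G) (h₂ : S₂ ∈ chordlessCycleSets G) (hne : S₁ ≠ S₂)
    (hcap : 1 < (S₁ ∩ S₂).ncard) :
    ¬ LinearIndependent (ZMod 2) fun S : chordlessCycleSets G => G.edgeVec S := by
  classical
  intro hli
  have hchordless {S : Set (Sym2 V)} (hS : S ∈ chordlessCycleSets G) :
      S ⊆ G.edgeSet ∧ 3 ≤ S.ncard ∧ G.boundary (G.edgeVec S) = 0 := by
    obtain ⟨u, c, ⟨hc, -⟩, rfl⟩ := hS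
    exact ⟨fun _ he => c.edges_subset_edgeSet he,
      hc.three_le_length.trans_eq hc.isTrail.ncard_edgeSet.symm,
      G.boundary_edgeVec_edgeSet_of_isTrail hc.isTrail⟩
  obtain ⟨hsub₁, hlen₁, hbd₁⟩ := hchordless h₁
  obtain ⟨hsub₂, hlen₂, hbd₂⟩ := hchordless h₂
  obtain ⟨A, hsum, hexcess⟩ := G.exists_chordless_sum_eq_edgeVec
    (Set.symmDiff_subset_union.trans (Set.union_subset hsub₁ hsub₂))
    (by rw [edgeVec_symmDiff, map_add, hbd₁, hbd₂, add_zero])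
  have hpair : (⟨S₁, h₁⟩ : chordlessCycleSets G) ≠ ⟨S₂, h₂⟩ := by simpa using hne
  have hA : A = {⟨S₁, h₁⟩, ⟨S₂, h₂⟩} := hli.finset_eq_of_sum_eq (by
    rw [hsum, Finset.sum_pair hpair, edgeVec_symmDiff])
  rw [hA, Finset.sum_pair hpair] at hexcess
  dsimp only at hexcess
  have := Set.ncard_symmDiff_add_two_mul_ncard_inter (Set.toFinite S₁) (Set.toFinite S₂)
  omega

end CycleSpace

end SimpleGraph

theorem card_chordless_cycles_gt_general [Fintype V] {G : SimpleGraph V}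
    (h : ∃ S ∈ chordlessCycleSets G, ∃ T ∈ chordlessCycleSets G,
      S ≠ T ∧ 1 < (S ∩ T).ncard) :
    (G.edgeSet.ncard : ℤ) - (Nat.card V : ℤ) + 1 < ((chordlessCycleSets G).ncard : ℤ) := by
  classical
  obtain ⟨S₁, h₁, S₂, h₂, hne, hcap⟩ := h
  have : Nonempty V := let ⟨v, _⟩ := h₁; ⟨v⟩
  let _ : Fintype (chordlessCycleSets G) := Fintype.ofFinite _
  have hdim := G.card_edgeSet_lt_finrank_ker_boundary_add_card
  have hspan := Submodule.finrank_mono G.ker_boundary_le_span_edgeVec_chordless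
  have hdep := linearIndependent_iff_card_le_finrank_span.not.mp
    (G.not_linearIndependent_edgeVec_chordless h₁ h₂ hne hcap)
  rw [Set.finrank] at hdep
  rw [← Nat.card_coe_set_eq, ← Nat.card_coe_set_eq, Nat.card_eq_fintype_card,
    Nat.card_eq_fintype_card, Nat.card_eq_fintype_card]
  omega

/-- If a connected finite graph has two chordless cycles with more than one common edge,
then it has strictly more than `e(G) - v(G) + 1` chordless cycles. -/
theorem card_chordless_cycles_gt [Fintype V] {G : SimpleGraph V}
    (hconn : G.Connected)
    (h : ∃ S ∈ chordlessCycleSets G, ∃ T ∈ chordlessCycleSets G,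
      S ≠ T ∧ 1 < (S ∩ T).ncard) :
    (G.edgeSet.ncard : ℤ) - (Nat.card V : ℤ) + 1 < ((chordlessCycleSets G).ncard : ℤ) :=
  card_chordless_cycles_gt_general h
end

section
/- Let H_n be the graph with vertices {x, y, u_1, v_1, ..., u_n, v_n} and edges {(x,u_i), (y,v_i), (u_i,v_i) : 1 ≤ i ≤ n} (so G_n with the edge (x,y) removed). Then the chordless cycles of H_n are exactly the cycles x,u_i,v_i,y,v_j,u_j for i < j, and hence H_n has exactly binomial(n,2) chordless cycles. -/
open SimpleGraph
variable {V : Type*}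

/-- The vertices of the graph `H_n`: `x`, `y`, and `u i`, `v i` for `i : Fin n`. -/
inductive HVert (n : ℕ) : Type
  | x : HVert n
  | y : HVert n
  | u : Fin n → HVert n
  | v : Fin n → HVert n
  deriving DecidableEq

/-- The graph `H_n`, with edges `(x, u i)`, `(y, v i)`, `(u i, v i)` for `1 ≤ i ≤ n`
(that is, `G_n` with the edge `(x,y)` removed). -/
def Hn (n : ℕ) : SimpleGraph (HVert n) :=
  SimpleGraph.fromRel (fun a b =>
    (∃ i, a = HVert.x ∧ b = HVert.u i) ∨
    (∃ i, a = HVert.y ∧ b = HVert.v i) ∨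
    (∃ i, a = HVert.u i ∧ b = HVert.v i))

/-!
Every inner vertex `u i`, `v i` of `H_n` has degree two, so a cycle that uses one edge of the
branch `x – u i – v i – y` uses the whole branch. Hence the edge set of a cycle is a union of
branches, and since `x` has exactly two neighbours on the cycle it is the union of exactly two
branches `i ≠ j`, which conversely form a hexagon. For the same reason every cycle of `H_n` is
chordless: an edge between two vertices of the cycle lies in a branch the cycle already contains.
Distinct pairs `{i, j}` give distinct edge sets, which yields `n.choose 2`.
-/

namespace SimpleGraph.Walk

variable {G : SimpleGraph V} {w a b : V} {c : G.Walk w w}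

theorem IsCycle.exists_forall_mem_edges_iff (hc : c.IsCycle) {v : V} (hv : v ∈ c.support) :
    ∃ a b, a ≠ b ∧ ∀ z, s(v, z) ∈ c.edges ↔ z = a ∨ z = b := by
  obtain ⟨a, b, hab, h⟩ := Set.ncard_eq_two.mp (hc.ncard_neighborSet_toSubgraph_eq_two hv)
  refine ⟨a, b, hab, fun z => ?_⟩
  rw [← adj_toSubgraph_iff_mem_edges, ← Subgraph.mem_neighborSet, h]
  rfl

theorem IsCycle.mem_edges_of_neighborSet_subset (hc : c.IsCycle) {v : V} (hv : v ∈ c.support)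
    (hN : G.neighborSet v ⊆ {a, b}) : s(v, a) ∈ c.edges ∧ s(v, b) ∈ c.edges := by
  obtain ⟨a', b', hab', h⟩ := hc.exists_forall_mem_edges_iff hv
  have ha' : a' = a ∨ a' = b := hN (c.adj_of_mem_edges ((h a').2 (.inl rfl)))
  have hb' : b' = a ∨ b' = b := hN (c.adj_of_mem_edges ((h b').2 (.inr rfl)))
  rw [h, h]
  rcases ha' with rfl | rfl <;> rcases hb' with rfl | rfl <;> simp_all

end SimpleGraph.Walk

namespace Hn

open HVert

variable {n : ℕ}

theorem adj_x_iff {z : HVert n} : (Hn n).Adj x z ↔ ∃ i, z = u i := by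
  cases z <;> simp [Hn]

theorem neighborSet_u (k : Fin n) : (Hn n).neighborSet (u k) = {x, v k} := by
  ext z; cases z <;> simp [Hn, eq_comm]

theorem neighborSet_v (k : Fin n) : (Hn n).neighborSet (v k) = {y, u k} := by
  ext z; cases z <;> simp [Hn, eq_comm]

def branch (m : Fin n) : Set (Sym2 (HVert n)) :=
  {s(x, u m), s(u m, v m), s(v m, y)}

theorem xu_mem_branch_iff {i m : Fin n} : s(x, u m) ∈ branch i ↔ m = i := by
  simp [branch]

theorem exists_mem_branch_of_adj {a b : HVert n} (h : (Hn n).Adj a b) :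
    ∃ m, s(a, b) ∈ branch m := by
  cases a <;> cases b <;> simp_all [Hn, branch, Sym2.eq_swap]

theorem branch_union_branch (i j : Fin n) :
    branch i ∪ branch j =
      {s(x, u i), s(u i, v i), s(v i, y), s(y, v j), s(v j, u j), s(u j, x)} := by
  ext e
  simp only [branch, Set.mem_union, Set.mem_insert_iff, Set.mem_singleton_iff]
  rw [Sym2.eq_swap (a := v j), Sym2.eq_swap (a := u j), Sym2.eq_swap (a := x) (b := u j)]
  tauto

section Cycles

variable {w : HVert n} {c : (Hn n).Walk w w}

theorem branch_subset_edges (hc : c.IsCycle) {m : Fin n} (hm : u m ∈ c.support) :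
    branch m ⊆ {e | e ∈ c.edges} := by
  obtain ⟨hux, huv⟩ := hc.mem_edges_of_neighborSet_subset hm (neighborSet_u m).subset
  obtain ⟨hvy, -⟩ := hc.mem_edges_of_neighborSet_subset (c.snd_mem_support_of_mem_edges huv)
    (neighborSet_v m).subset
  rintro e (rfl | rfl | rfl)
  exacts [Sym2.eq_swap ▸ hux, huv, hvy]

theorem u_mem_support_of_mem_branch (hc : c.IsCycle) {a b : HVert n} {m : Fin n}
    (he : s(a, b) ∈ branch m) (ha : a ∈ c.support) (hb : b ∈ c.support) :
    u m ∈ c.support := by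
  have hv : u m ∈ c.support ∨ v m ∈ c.support := by
    simp only [branch, Set.mem_insert_iff, Set.mem_singleton_iff, Sym2.eq_iff] at he
    aesop
  exact hv.elim id fun hv => c.snd_mem_support_of_mem_edges
    (hc.mem_edges_of_neighborSet_subset hv (neighborSet_v m).subset).2

theorem isChordlessCycle_of_isCycle (hc : c.IsCycle) : IsChordlessCycle c := by
  refine ⟨hc, fun a b ha hb hab => ?_⟩
  obtain ⟨m, hm⟩ := exists_mem_branch_of_adj hab
  exact branch_subset_edges hc (u_mem_support_of_mem_branch hc hm ha hb) hm

theorem exists_branch_subset_edges (hc : c.IsCycle) {e : Sym2 (HVert n)} (he : e ∈ c.edges) :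
    ∃ m, e ∈ branch m ∧ branch m ⊆ {e | e ∈ c.edges} := by
  induction e using Sym2.ind with
  | _ a b =>
    obtain ⟨m, hm⟩ := exists_mem_branch_of_adj (c.adj_of_mem_edges he)
    exact ⟨m, hm, branch_subset_edges hc (u_mem_support_of_mem_branch hc hm
      (c.fst_mem_support_of_mem_edges he) (c.snd_mem_support_of_mem_edges he))⟩

theorem exists_edges_eq_branch_union (hc : c.IsCycle) :
    ∃ i j, i ≠ j ∧ {e | e ∈ c.edges} = branch i ∪ branch j := by
  obtain ⟨e, he⟩ := List.exists_mem_of_ne_nil _ (Walk.edges_eq_nil.not.2 hc.not_nil)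
  obtain ⟨m, -, hm⟩ := exists_branch_subset_edges hc he
  have hx : x ∈ c.support := c.fst_mem_support_of_mem_edges (hm (xu_mem_branch_iff.2 rfl))
  obtain ⟨a, b, hab, hxab⟩ := hc.exists_forall_mem_edges_iff hx
  obtain ⟨i, rfl⟩ := adj_x_iff.1 (c.adj_of_mem_edges ((hxab a).2 (.inl rfl)))
  obtain ⟨j, rfl⟩ := adj_x_iff.1 (c.adj_of_mem_edges ((hxab b).2 (.inr rfl)))
  have hxu (m : Fin n) : s(x, u m) ∈ c.edges ↔ m = i ∨ m = j := by simpa using hxab (u m)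
  refine ⟨i, j, fun h => hab (h ▸ rfl), Set.Subset.antisymm (fun e he => ?_) ?_⟩
  · obtain ⟨m, hem, hm⟩ := exists_branch_subset_edges hc he
    rcases (hxu m).1 (hm (xu_mem_branch_iff.2 rfl)) with rfl | rfl
    exacts [.inl hem, .inr hem]
  · exact Set.union_subset
      (branch_subset_edges hc (c.snd_mem_support_of_mem_edges ((hxu i).2 (.inl rfl))))
      (branch_subset_edges hc (c.snd_mem_support_of_mem_edges ((hxu j).2 (.inr rfl))))

end Cycles

def hexagon (i j : Fin n) : (Hn n).Walk x x :=
  .cons (by simp [Hn] : (Hn n).Adj x (u i)) <| .cons (by simp [Hn] : (Hn n).Adj (u i) (v i)) <|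
    .cons (by simp [Hn] : (Hn n).Adj (v i) y) <| .cons (by simp [Hn] : (Hn n).Adj y (v j)) <|
    .cons (by simp [Hn] : (Hn n).Adj (v j) (u j)) <| .cons (by simp [Hn] : (Hn n).Adj (u j) x) .nil

theorem hexagon_isCycle {i j : Fin n} (hij : i ≠ j) : (hexagon i j).IsCycle := by
  simp [Walk.isCycle_def, Walk.isTrail_def, hexagon, hij]

theorem edges_hexagon (i j : Fin n) : {e | e ∈ (hexagon i j).edges} = branch i ∪ branch j := by
  rw [branch_union_branch]
  ext e
  simp [hexagon]

theorem chordlessCycleSets_eq :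
    chordlessCycleSets (Hn n) =
      (fun p : Fin n × Fin n => branch p.1 ∪ branch p.2) '' {p | p.1 < p.2} := by
  ext S
  constructor
  · rintro ⟨w, c, hc, rfl⟩
    obtain ⟨i, j, hij, hS⟩ := exists_edges_eq_branch_union hc.1
    rcases hij.lt_or_gt with h | h
    · exact ⟨(i, j), h, hS.symm⟩
    · exact ⟨(j, i), h, hS.trans (Set.union_comm _ _) |>.symm⟩
  · rintro ⟨⟨i, j⟩, hij, rfl⟩
    exact ⟨x, hexagon i j, isChordlessCycle_of_isCycle (hexagon_isCycle hij.ne),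
      (edges_hexagon i j).symm⟩

theorem injOn_branch_union :
    Set.InjOn (fun p : Fin n × Fin n => branch p.1 ∪ branch p.2) {p | p.1 < p.2} := by
  rintro ⟨i, j⟩ hij ⟨k, l⟩ hkl h
  have hpair : s(i, j) = s(k, l) := Sym2.ext fun m => by
    simpa [xu_mem_branch_iff] using Set.ext_iff.1 h (s(x, u m))
  rcases Sym2.eq_iff.1 hpair with ⟨rfl, rfl⟩ | ⟨rfl, rfl⟩
  · rfl
  · exact (lt_asymm (show i < j from hij) hkl).elim

end Hn

/-- The chordless cycles of `H_n` are exactly the six-cycles `x,u i,v i,y,v j,u j` for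
`i < j`, so there are `binomial(n,2)` of them. -/
theorem chordless_cycles_of_Hn (n : ℕ) :
    chordlessCycleSets (Hn n) =
      {S | ∃ i j : Fin n, i < j ∧
        S = ({s(HVert.x, HVert.u i), s(HVert.u i, HVert.v i), s(HVert.v i, HVert.y),
              s(HVert.y, HVert.v j), s(HVert.v j, HVert.u j), s(HVert.u j, HVert.x)} :
              Set (Sym2 (HVert n)))} ∧
    (chordlessCycleSets (Hn n)).ncard = n.choose 2 := by
  rw [Hn.chordlessCycleSets_eq, Hn.injOn_branch_union.ncard_image]
  refine ⟨?_, ?_⟩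
  · ext S
    simp only [Set.mem_image, Prod.exists, Set.mem_ofPred_eq, Hn.branch_union_branch, eq_comm]
  · have h := Fintype.card_product_filter_lt (α := Fin n)
    rwa [Fintype.card_fin, ← Set.ncard_coe_finset, Finset.coe_filter_univ] at h
end
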